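/- arXiv:1807.08573 — 2 statements merged into one kernel-verified Lean document; each statement's English description precedes it below -/
import Mathlib

section
/- Every entropic vector is a polymatroid: for every joint pmf p ∈ 𝒫, the set function f(α) = H(p_α) (with f(∅) = 0) satisfies (i) f(α) ≥ 0 for all α; (ii) monotonicity: α ⊆ β ⟹ H(p_α) ≤ H(p_β); and (iii) submodularity: H(p_{α∪β}) + H(p_{α∩β}) ≤ H(p_α) + H(p_β) for all α, β ⊆ {1,…,n}. -/
noncomputable section

/-- A probability mass function on a finite type. -/
def IsPmf {Ω : Type*} [Fintype Ω] (p : Ω → ℝ) : Prop :=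
  (∀ x, 0 ≤ p x) ∧ ∑ x, p x = 1

open Classical in
/-- The marginal pmf of a joint pmf `p` on the coordinates in `α`. -/
noncomputable def marginal {n : ℕ} (X : Fin n → Type) [∀ i, Fintype (X i)]
    (p : (∀ i, X i) → ℝ) (α : Finset (Fin n)) : ((i : α) → X i.1) → ℝ :=
  fun y => ∑ x : ∀ i, X i, if (∀ i : {i // i ∈ α}, x i.1 = y i) then p x else 0

/-- Shannon entropy of a pmf on a finite type (convention `0 * log 0 = 0`). -/
noncomputable def entropy {Ω : Type*} [Fintype Ω] (q : Ω → ℝ) : ℝ :=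
  -∑ x, q x * Real.log (q x)

/-! Every marginal is the pushforward `f₊p` of `p` along a map `f` (a coordinate restriction), and
`H(f₊p) = -∑ₓ p x log (f₊p (f x))`. Coarsening `f` only enlarges the atom `f₊p (f x)` of each `x`,
which gives monotonicity. For submodularity, let `C = h ∘ A = k ∘ B` be a common coarsening of
`A` and `B`. By `log t ≤ t - 1` it suffices that `∑ₓ p x · p_A p_B / (p_{AB} p_C) ≤ 1`; grouping by
`(a, b)` bounds this by `∑_{h a = k b} p_A(a) p_B(b) / p_C(h a) ≤ ∑_a p_A(a) = 1`. For marginals,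
`A, B` are the restrictions to `α, β`, the pair `(A, B)` is an injective image of the restriction to
`α ∪ β`, and `C` is the restriction to `α ∩ β`. -/

open Finset Real

section Pushforward

variable {Ω α β : Type*} [Fintype Ω] [DecidableEq α] [DecidableEq β]

def pushforward (f : Ω → α) (p : Ω → ℝ) (a : α) : ℝ :=
  ∑ x, if f x = a then p x else 0

theorem sum_pushforward_mul [Fintype α] (f : Ω → α) (p : Ω → ℝ) (g : α → ℝ) :
    ∑ a, pushforward f p a * g a = ∑ x, p x * g (f x) := by
  simp only [pushforward, sum_mul, ite_mul, zero_mul]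
  rw [sum_comm]
  simp

theorem sum_pushforward [Fintype α] (f : Ω → α) (p : Ω → ℝ) :
    ∑ a, pushforward f p a = ∑ x, p x := by
  simpa using sum_pushforward_mul f p 1

theorem pushforward_nonneg {p : Ω → ℝ} (hp : ∀ x, 0 ≤ p x) (f : Ω → α) (a : α) :
    0 ≤ pushforward f p a :=
  sum_nonneg fun x _ => by split_ifs <;> simp [hp x]

theorem le_pushforward_apply {p : Ω → ℝ} (hp : ∀ x, 0 ≤ p x) (f : Ω → α) (x : Ω) :
    p x ≤ pushforward f p (f x) := by
  simpa [pushforward] using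
    single_le_sum (f := fun y => if f y = f x then p y else 0)
      (fun y _ => by split_ifs <;> simp [hp y]) (mem_univ x)

theorem exists_eq_of_pushforward_ne_zero {f : Ω → α} {p : Ω → ℝ} {a : α}
    (h : pushforward f p a ≠ 0) : ∃ x, f x = a := by
  by_contra! hf
  exact h (sum_eq_zero fun x _ => if_neg (hf x))

theorem pushforward_comp [Fintype α] (h : α → β) (f : Ω → α) (p : Ω → ℝ) :
    pushforward (h ∘ f) p = pushforward h (pushforward f p) := by
  funext b
  simpa [pushforward, mul_ite] using
    (sum_pushforward_mul f p fun a => if h a = b then 1 else 0).symm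

theorem pushforward_comp_apply_of_injective {e : α → β} (he : Function.Injective e)
    (f : Ω → α) (p : Ω → ℝ) (a : α) :
    pushforward (e ∘ f) p (e a) = pushforward f p a := by
  simp only [pushforward, Function.comp_apply, he.eq_iff]

theorem entropy_pushforward [Fintype α] (f : Ω → α) (p : Ω → ℝ) :
    entropy (pushforward f p) = -∑ x, p x * log (pushforward f p (f x)) := by
  rw [entropy, sum_pushforward_mul]

theorem entropy_pushforward_comp_of_injective [Fintype α] [Fintype β] {e : α → β}
    (he : Function.Injective e) (f : Ω → α) (p : Ω → ℝ) :
    entropy (pushforward (e ∘ f) p) = entropy (pushforward f p) := by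
  simp only [entropy_pushforward, Function.comp_apply,
    pushforward_comp_apply_of_injective he]

theorem entropy_pushforward_of_subsingleton [Fintype α] [Subsingleton α] {p : Ω → ℝ}
    (hp : IsPmf p) (f : Ω → α) : entropy (pushforward f p) = 0 := by
  have hf : ∀ x, pushforward f p (f x) = 1 := fun x => by
    simp [pushforward, Subsingleton.elim (f _) (f x), hp.2]
  simp [entropy_pushforward, hf]

theorem entropy_pushforward_comp_le [Fintype α] [Fintype β] {p : Ω → ℝ} (hp : ∀ x, 0 ≤ p x)
    (h : α → β) (f : Ω → α) :
    entropy (pushforward (h ∘ f) p) ≤ entropy (pushforward f p) := by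
  rw [entropy_pushforward, entropy_pushforward, neg_le_neg_iff]
  refine sum_le_sum fun x _ => ?_
  rcases (hp x).eq_or_lt with hx | hx
  · simp [← hx]
  refine mul_le_mul_of_nonneg_left (log_le_log (hx.trans_le (le_pushforward_apply hp f x)) ?_) hx.le
  rw [pushforward_comp, Function.comp_apply]
  exact le_pushforward_apply (pushforward_nonneg hp f) h (f x)

theorem sum_mul_log_nonpos {p r : Ω → ℝ} (hp : IsPmf p) (hr : ∀ x, 0 < p x → 0 < r x)
    (hpr : ∑ x, p x * r x ≤ 1) : ∑ x, p x * log (r x) ≤ 0 :=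
  calc ∑ x, p x * log (r x) ≤ ∑ x, (p x * r x - p x) := sum_le_sum fun x _ => by
        rcases (hp.1 x).eq_or_lt with hx | hx
        · simp [← hx]
        rw [← mul_sub_one]
        exact mul_le_mul_of_nonneg_left (log_le_sub_one_of_pos (hr x hx)) hx.le
    _ = ∑ x, p x * r x - 1 := by rw [sum_sub_distrib, hp.2]
    _ ≤ 0 := by linarith

end Pushforward

section Submodularity

variable {Ω α β γ : Type*} [Fintype Ω] [Fintype α] [Fintype β]
  [DecidableEq α] [DecidableEq β] [DecidableEq γ]
  {p : Ω → ℝ} (hp : IsPmf p) {f : Ω → α} {g : Ω → β} {h : α → γ} {k : β → γ}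

include hp in
theorem sum_mul_pushforward_ratio_le_one (hfg : h ∘ f = k ∘ g) :
    ∑ x, p x * (pushforward f p (f x) * pushforward g p (g x) /
      (pushforward (fun x => (f x, g x)) p (f x, g x) * pushforward (h ∘ f) p (h (f x)))) ≤ 1 := by
  set pA := pushforward f p
  set pB := pushforward g p
  set pAB := pushforward (fun x => (f x, g x)) p
  set pC := pushforward (h ∘ f) p
  have hpC : pushforward k pB = pC := by rw [← pushforward_comp, ← hfg]
  calc _ = ∑ ab : α × β, pAB ab * (pA ab.1 * pB ab.2 / (pAB ab * pC (h ab.1))) :=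
        (sum_pushforward_mul _ p fun ab => pA ab.1 * pB ab.2 / (pAB ab * pC (h ab.1))).symm
    _ ≤ ∑ ab : α × β, if h ab.1 = k ab.2 then pA ab.1 * pB ab.2 / pC (h ab.1) else 0 := by
        refine sum_le_sum fun ab _ => ?_
        rcases eq_or_ne (pAB ab) 0 with h0 | h0
        · rw [h0, zero_mul]
          split_ifs
          · exact div_nonneg (mul_nonneg (pushforward_nonneg hp.1 f _)
              (pushforward_nonneg hp.1 g _)) (pushforward_nonneg hp.1 _ _)
          · rfl
        obtain ⟨x, rfl⟩ := exists_eq_of_pushforward_ne_zero h0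
        dsimp only
        rw [if_pos (show h (f x) = k (g x) from congrFun hfg x), ← mul_div_assoc,
          mul_div_mul_left _ _ h0]
    _ = ∑ a, pA a / pC (h a) * pushforward k pB (h a) := by
        rw [Fintype.sum_prod_type]
        refine sum_congr rfl fun a _ => ?_
        simp only [pushforward, mul_sum, mul_ite, mul_zero, eq_comm, div_mul_eq_mul_div]
    _ ≤ ∑ a, pA a := by
        rw [hpC]
        refine sum_le_sum fun a _ => ?_
        rcases eq_or_ne (pC (h a)) 0 with h0 | h0
        · simpa [h0] using pushforward_nonneg hp.1 f a
        · rw [div_mul_cancel₀ _ h0]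
    _ = 1 := by rw [sum_pushforward, hp.2]

include hp in
theorem entropy_pushforward_submodular [Fintype γ] (hfg : h ∘ f = k ∘ g) :
    entropy (pushforward (fun x => (f x, g x)) p) + entropy (pushforward (h ∘ f) p) ≤
      entropy (pushforward f p) + entropy (pushforward g p) := by
  simp only [entropy_pushforward, Function.comp_apply]
  set pA := pushforward f p
  set pB := pushforward g p
  set pAB := pushforward (fun x => (f x, g x)) p
  set pC := pushforward (h ∘ f) p
  have hpos : ∀ x, 0 < p x →
      0 < pA (f x) ∧ 0 < pB (g x) ∧ 0 < pAB (f x, g x) ∧ 0 < pC (h (f x)) := fun x hx =>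
    ⟨hx.trans_le (le_pushforward_apply hp.1 f x), hx.trans_le (le_pushforward_apply hp.1 g x),
      hx.trans_le (le_pushforward_apply hp.1 _ x), hx.trans_le (le_pushforward_apply hp.1 _ x)⟩
  have hlog : ∀ x, p x * log (pA (f x) * pB (g x) / (pAB (f x, g x) * pC (h (f x)))) =
      p x * log (pA (f x)) + p x * log (pB (g x)) - p x * log (pAB (f x, g x)) -
        p x * log (pC (h (f x))) := fun x => by
    rcases (hp.1 x).eq_or_lt with hx | hx
    · simp [← hx]
    obtain ⟨hA, hB, hAB, hC⟩ := hpos x hx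
    rw [log_div (by positivity) (by positivity), log_mul hA.ne' hB.ne', log_mul hAB.ne' hC.ne']
    ring
  have hgibbs : ∑ x, p x * log (pA (f x) * pB (g x) / (pAB (f x, g x) * pC (h (f x)))) ≤ 0 :=
    sum_mul_log_nonpos hp (fun x hx => by obtain ⟨_, _, _, _⟩ := hpos x hx; positivity)
      (sum_mul_pushforward_ratio_le_one hp hfg)
  simp only [hlog, sum_sub_distrib, sum_add_distrib] at hgibbs
  linarith

end Submodularity

theorem Finset.restrict₂_union_injective {ι : Type*} [DecidableEq ι] {E : ι → Type*}
    (s t : Finset ι) :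
    Function.Injective fun y : (i : ↥(s ∪ t)) → E i =>
      ((restrict₂ subset_union_left y : (i : ↥s) → E i),
        (restrict₂ subset_union_right y : (i : ↥t) → E i)) :=
  fun _ _ hyz => funext fun i => (mem_union.1 i.2).elim
    (fun hi => congrFun (Prod.ext_iff.1 hyz).1 ⟨i, hi⟩)
    (fun hi => congrFun (Prod.ext_iff.1 hyz).2 ⟨i, hi⟩)

open Classical in
theorem marginal_eq_pushforward {n : ℕ} (X : Fin n → Type) [∀ i, Fintype (X i)]
    (p : (∀ i, X i) → ℝ) (α : Finset (Fin n)) :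
    marginal X p α = pushforward α.restrict p :=
  funext fun _ => sum_congr rfl fun _ _ => if_congr funext_iff.symm rfl rfl

theorem entropy_isPolymatroid_general {n : ℕ}
    (X : Fin n → Type) [∀ i, Fintype (X i)]
    (p : (∀ i, X i) → ℝ) (hp : IsPmf p) :
    entropy (marginal X p ∅) = 0 ∧
    (∀ α : Finset (Fin n), 0 ≤ entropy (marginal X p α)) ∧
    (∀ α β : Finset (Fin n), α ⊆ β →
      entropy (marginal X p α) ≤ entropy (marginal X p β)) ∧
    (∀ α β : Finset (Fin n),
      entropy (marginal X p (α ∪ β)) + entropy (marginal X p (α ∩ β)) ≤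
        entropy (marginal X p α) + entropy (marginal X p β)) := by
  classical
  have hempty : entropy (marginal X p ∅) = 0 := by
    rw [marginal_eq_pushforward]
    exact entropy_pushforward_of_subsingleton hp _
  have hmono : ∀ α β : Finset (Fin n), α ⊆ β →
      entropy (marginal X p α) ≤ entropy (marginal X p β) := fun α β hαβ => by
    simpa only [marginal_eq_pushforward, ← restrict₂_comp_restrict hαβ] using
      entropy_pushforward_comp_le hp.1 _ _
  refine ⟨hempty, fun α => hempty ▸ hmono ∅ α (empty_subset α), hmono, fun α β => ?_⟩
  simp only [marginal_eq_pushforward]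
  rw [← entropy_pushforward_comp_of_injective (restrict₂_union_injective α β),
    ← restrict₂_comp_restrict inter_subset_left]
  exact entropy_pushforward_submodular hp (f := α.restrict) (g := β.restrict)
    (k := restrict₂ inter_subset_right) rfl

/-- Every entropic vector is a polymatroid: the set function `α ↦ H(p_α)` vanishes at `∅`,
is nonnegative, monotone and submodular. -/
theorem entropy_isPolymatroid {n : ℕ} (hn : 1 ≤ n)
    (X : Fin n → Type) [∀ i, Fintype (X i)] [∀ i, Nonempty (X i)]
    (p : (∀ i, X i) → ℝ) (hp : IsPmf p) :
    entropy (marginal X p ∅) = 0 ∧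
    (∀ α : Finset (Fin n), 0 ≤ entropy (marginal X p α)) ∧
    (∀ α β : Finset (Fin n), α ⊆ β →
      entropy (marginal X p α) ≤ entropy (marginal X p β)) ∧
    (∀ α β : Finset (Fin n),
      entropy (marginal X p (α ∪ β)) + entropy (marginal X p (α ∩ β)) ≤
        entropy (marginal X p α) + entropy (marginal X p β)) :=
  entropy_isPolymatroid_general X p hp
end
end

section
/- The normalized distance fails the triangle inequality on polymatroids: there exist n ≥ 1 and polymatroids x, y, z on {1,…,n}, none identically zero, such that d_norm(x, y) + d_norm(y, z) < d_norm(x, z). (All the normalized distances here are well defined because any two nonzero polymatroids have strictly positive inner product.) -/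
noncomputable section

/-- A polymatroid on `{1,…,n}`: a set function vanishing at `∅`, monotone and submodular. -/
def IsPolymatroid {n : ℕ} (f : Finset (Fin n) → ℝ) : Prop :=
  f ∅ = 0 ∧ (∀ α β : Finset (Fin n), α ⊆ β → f α ≤ f β) ∧
    ∀ α β : Finset (Fin n), f (α ∪ β) + f (α ∩ β) ≤ f α + f β

/-- A polymatroid viewed as a vector in `ℝ^(2^n - 1)`, indexed by nonempty subsets. -/
noncomputable def polyVec {n : ℕ} (f : Finset (Fin n) → ℝ) :
    EuclideanSpace ℝ {α : Finset (Fin n) // α.Nonempty} :=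
  WithLp.toLp 2 (fun α => f α.1)

open scoped RealInnerProductSpace

/-- The normalized distance `d_norm(x, y) = ‖x − yʹ‖ / ‖yʹ‖` where
`yʹ = (⟪x, y⟫ / ‖y‖²) • y` is the nearest point to `x` on the ray `E_y`. -/
noncomputable def dnorm {E : Type*} [NormedAddCommGroup E] [InnerProductSpace ℝ E]
    (x y : E) : ℝ :=
  ‖x - (⟪x, y⟫ / ‖y‖ ^ 2) • y‖ / ‖(⟪x, y⟫ / ‖y‖ ^ 2) • y‖

/-!
For `1 ≤ t ≤ 2`, `pairFn t` (value `1` on singletons, `t` on `{0, 1}`) is a polymatroid with vector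
`(1, 1, t)`. The normalized distance is the tangent of the angle between two vectors, here
`√2 |s - t| / (2 + s t)`. The vectors for `t = 1, 3/2, 2` lie in one plane, the middle one between
the others, so their angles add up, while the tangent is strictly superadditive on `[0, π/2)`:
`√2/7 + √2/10 < √2/4`.
-/

-- When `⟪x, y⟫ = 0` both sides are `0`, by the convention `a / 0 = 0`.
theorem dnorm_eq_sqrt_div_abs_inner {E : Type*} [NormedAddCommGroup E] [InnerProductSpace ℝ E]
    (x y : E) :
    dnorm x y = √(‖x‖ ^ 2 * ‖y‖ ^ 2 - ⟪x, y⟫ ^ 2) / |⟪x, y⟫| := by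
  rcases eq_or_ne ⟪x, y⟫ 0 with h | h
  · simp [dnorm, h]
  have hy : 0 < ‖y‖ := norm_pos_iff.mpr fun hy => h (by simp [hy])
  have hproj : ‖(⟪x, y⟫ / ‖y‖ ^ 2) • y‖ = |⟪x, y⟫| / ‖y‖ := by
    rw [norm_smul, Real.norm_eq_abs, abs_div, abs_of_pos (pow_pos hy 2)]
    field_simp
  have hperp : ‖x - (⟪x, y⟫ / ‖y‖ ^ 2) • y‖ = √(‖x‖ ^ 2 * ‖y‖ ^ 2 - ⟪x, y⟫ ^ 2) / ‖y‖ := by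
    rw [eq_div_iff hy.ne', ← Real.sqrt_sq (mul_nonneg (norm_nonneg _) hy.le)]
    congr 1
    rw [mul_pow, norm_sub_sq_real, inner_smul_right, norm_smul, mul_pow, Real.norm_eq_abs, sq_abs]
    field_simp
    ring
  rw [dnorm, hperp, hproj, div_div_div_cancel_right₀ hy.ne']

theorem inner_polyVec_eq_sum {n : ℕ} {f : Finset (Fin n) → ℝ} (hf : f ∅ = 0)
    (g : Finset (Fin n) → ℝ) :
    ⟪polyVec f, polyVec g⟫ = ∑ α, f α * g α := by
  have hempty : ∑ α : {α : Finset (Fin n) // ¬ α.Nonempty}, f α * g α = 0 :=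
    Fintype.sum_eq_zero _ fun α => by simp [Finset.not_nonempty_iff_eq_empty.mp α.2, hf]
  rw [← Fintype.sum_subtype_add_sum_subtype Finset.Nonempty, hempty, add_zero, PiLp.inner_apply]
  simp [polyVec, mul_comm]

theorem sum_univ_finset_fin_two {M : Type*} [AddCommMonoid M] (F : Finset (Fin 2) → M) :
    ∑ α, F α = F ∅ + F {0} + F {1} + F Finset.univ := by
  rw [show (Finset.univ : Finset (Finset (Fin 2))) = {∅, {0}, {1}, Finset.univ} by decide,
    Finset.sum_insert (by decide), Finset.sum_insert (by decide), Finset.sum_pair (by decide),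
    add_assoc, add_assoc]

def pairFn (t : ℝ) (α : Finset (Fin 2)) : ℝ :=
  if α = ∅ then 0 else if α = Finset.univ then t else 1

theorem pairFn_empty (t : ℝ) : pairFn t ∅ = 0 := rfl

theorem pairFn_singleton (t : ℝ) (i : Fin 2) : pairFn t {i} = 1 := by
  fin_cases i <;> simp [pairFn, Finset.ext_iff]

theorem pairFn_univ (t : ℝ) : pairFn t Finset.univ = t := by
  simp [pairFn, Finset.univ_nonempty.ne_empty]

theorem isPolymatroid_pairFn {t : ℝ} (h₁ : 1 ≤ t) (h₂ : t ≤ 2) : IsPolymatroid (pairFn t) := by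
  refine ⟨rfl, ?_, ?_⟩ <;> intro α β <;> fin_cases α <;> fin_cases β <;>
    simp [pairFn, Finset.ext_iff, Finset.subset_iff, Fin.forall_fin_two] <;> linarith

theorem inner_polyVec_pairFn (s t : ℝ) :
    ⟪polyVec (pairFn s), polyVec (pairFn t)⟫ = 2 + s * t := by
  rw [inner_polyVec_eq_sum rfl, sum_univ_finset_fin_two]
  simp only [pairFn_empty, pairFn_singleton, pairFn_univ]
  ring

theorem dnorm_polyVec_pairFn (s t : ℝ) :
    dnorm (polyVec (pairFn s)) (polyVec (pairFn t)) = √2 * |s - t| / |2 + s * t| := by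
  have hidentity : (2 + s ^ 2) * (2 + t ^ 2) - (2 + s * t) ^ 2 = 2 * (s - t) ^ 2 := by ring
  rw [dnorm_eq_sqrt_div_abs_inner, ← real_inner_self_eq_norm_sq, ← real_inner_self_eq_norm_sq,
    inner_polyVec_pairFn, inner_polyVec_pairFn, inner_polyVec_pairFn, ← sq, ← sq, hidentity,
    Real.sqrt_mul zero_le_two, Real.sqrt_sq_eq_abs]

/-- The normalized distance fails the triangle inequality on nonzero polymatroids. -/
theorem dnorm_not_triangle :
    ∃ (n : ℕ), 1 ≤ n ∧ ∃ x y z : Finset (Fin n) → ℝ,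
      IsPolymatroid x ∧ IsPolymatroid y ∧ IsPolymatroid z ∧
      (∃ α, x α ≠ 0) ∧ (∃ α, y α ≠ 0) ∧ (∃ α, z α ≠ 0) ∧
      dnorm (polyVec x) (polyVec y) + dnorm (polyVec y) (polyVec z) <
        dnorm (polyVec x) (polyVec z) := by
  have hsingleton (t : ℝ) : pairFn t {0} ≠ 0 := by simp [pairFn_singleton]
  refine ⟨2, one_le_two, pairFn 1, pairFn (3 / 2), pairFn 2,
    isPolymatroid_pairFn le_rfl (by norm_num), isPolymatroid_pairFn (by norm_num) (by norm_num),
    isPolymatroid_pairFn one_le_two le_rfl,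
    ⟨_, hsingleton 1⟩, ⟨_, hsingleton (3 / 2)⟩, ⟨_, hsingleton 2⟩, ?_⟩
  simp only [dnorm_polyVec_pairFn]
  norm_num
  linarith [Real.sqrt_pos.mpr (zero_lt_two' ℝ)]
end
end
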